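/- arXiv:1711.06318 — 3 statements merged into one kernel-verified Lean document; each statement's English description precedes it below -/
import Mathlib

section
/- In the 3x3 game (with 0 < ρ < 1) with U1 = [[5,0,0],[0,0,0],[ρ,ρ,2]] and U2 = [[0,0,ρ],[0,5,ρ],[0,0,2]], the pure profile (a3,a6) is the unique Nash equilibrium. -/
/-!
Against any mixed column strategy, row a3 (all of whose payoffs are positive) earns a positive
payoff while a2 earns 0; since an equilibrium strategy puts no weight on an action that is
strictly worse than another one, a2 is never played. Then column a6 earns a positive payoff
against the row strategy while a4 and a5 earn 0, so the column player plays a6; against a6, row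
a1 earns 0 < 2, so the row player plays a3.
-/

open Finset

/-- A mixed strategy: nonnegative probabilities summing to 1. -/
def isDist {α : Type*} [Fintype α] (x : α → ℝ) : Prop :=
  (∀ a, 0 ≤ x a) ∧ ∑ a, x a = 1

/-- Expected payoff in a bimatrix game. -/
def pay {m k : ℕ} (U : Fin m → Fin k → ℝ) (x : Fin m → ℝ) (y : Fin k → ℝ) : ℝ :=
  ∑ i, ∑ j, x i * U i j * y j

/-- The indicator (pureStrat) strategy on action `i`. -/
def pureStrat {m : ℕ} (i : Fin m) : Fin m → ℝ := fun j => if j = i then 1 else 0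

/-- Nash equilibrium of a bimatrix game: mutual best responses among mixed strategies. -/
def isNE {m k : ℕ} (U1 U2 : Fin m → Fin k → ℝ) (x : Fin m → ℝ) (y : Fin k → ℝ) : Prop :=
  isDist x ∧ isDist y ∧
  (∀ x', isDist x' → pay U1 x' y ≤ pay U1 x y) ∧
  (∀ y', isDist y' → pay U2 x y' ≤ pay U2 x y)

def H1 (ρ : ℝ) : Fin 3 → Fin 3 → ℝ := ![![5, 0, 0], ![0, 0, 0], ![ρ, ρ, 2]]
def H2 (ρ : ℝ) : Fin 3 → Fin 3 → ℝ := ![![0, 0, ρ], ![0, 5, ρ], ![0, 0, 2]]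

section Distributions

variable {α : Type*} [Fintype α] {x r : α → ℝ}

theorem isDist.sum_mul_le {v : ℝ} (hx : isDist x) (hr : ∀ i, r i ≤ v) :
    ∑ i, x i * r i ≤ v :=
  calc ∑ i, x i * r i ≤ ∑ i, x i * v :=
        sum_le_sum fun i _ => mul_le_mul_of_nonneg_left (hr i) (hx.1 i)
    _ = v := by rw [← sum_mul, hx.2, one_mul]

theorem isDist.eq_zero_of_lt {i k : α} (hx : isDist x) (hr : ∀ k, r k ≤ ∑ j, x j * r j)
    (hlt : r i < r k) : x i = 0 := by
  obtain ⟨m, -, hm⟩ := exists_max_image univ r ⟨i, mem_univ i⟩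
  have hterm : ∀ j ∈ univ, 0 ≤ x j * (r m - r j) := fun j hj =>
    mul_nonneg (hx.1 j) (sub_nonneg.2 (hm j hj))
  -- the gaps to the maximum `r m` have `x`-average `r m - ∑ j, x j * r j ≤ 0`
  have hgap : ∑ j, x j * (r m - r j) = 0 := by
    refine le_antisymm ?_ (sum_nonneg hterm)
    simp only [mul_sub, sum_sub_distrib, ← sum_mul, hx.2, one_mul]
    linarith [hr m]
  have hi := (sum_eq_zero_iff_of_nonneg hterm).1 hgap i (mem_univ i)
  have hpos : 0 < r m - r i := by linarith [hm k (mem_univ k)]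
  exact (mul_eq_zero.1 hi).resolve_right hpos.ne'

theorem isDist.sum_mul_pos (hx : isDist x) (hr : ∀ i, 0 < r i) : 0 < ∑ i, x i * r i := by
  obtain ⟨i, -, hi⟩ := exists_ne_zero_of_sum_ne_zero (hx.2 ▸ one_ne_zero : ∑ i, x i ≠ 0)
  exact sum_pos' (fun j _ => mul_nonneg (hx.1 j) (hr j).le)
    ⟨i, mem_univ i, mul_pos ((hx.1 i).lt_of_ne' hi) (hr i)⟩

theorem isDist.eq_pureStrat {m : ℕ} {x : Fin m → ℝ} {i : Fin m} (hx : isDist x)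
    (h : ∀ j, j ≠ i → x j = 0) : x = pureStrat i := by
  have hxi : x i = 1 := by rw [← hx.2, sum_eq_single i fun j _ hj => h j hj]; simp
  funext j
  by_cases hj : j = i
  · simp [pureStrat, hj, hxi]
  · simp [pureStrat, hj, h j hj]

theorem isDist_pureStrat {m : ℕ} (i : Fin m) : isDist (pureStrat i) :=
  ⟨fun j => by unfold pureStrat; split <;> norm_num, by simp [pureStrat]⟩

end Distributions

section Payoffs

variable {m k : ℕ} (U : Fin m → Fin k → ℝ) (x : Fin m → ℝ) (y : Fin k → ℝ)

theorem pay_pureStrat_left (i : Fin m) : pay U (pureStrat i) y = ∑ j, U i j * y j := by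
  simp [pay, pureStrat]

theorem pay_pureStrat_right (j : Fin k) : pay U x (pureStrat j) = ∑ i, x i * U i j := by
  simp [pay, pureStrat]

variable {U x y} in
theorem pay_pureStrat_left_pos {i : Fin m} (hy : isDist y) (hU : ∀ j, 0 < U i j) :
    0 < pay U (pureStrat i) y := by
  rw [pay_pureStrat_left]
  simpa only [mul_comm] using hy.sum_mul_pos hU

variable {U x y} in
theorem pay_pureStrat_right_pos {j : Fin k} (hx : isDist x) (hU : ∀ i, 0 < U i j) :
    0 < pay U x (pureStrat j) :=
  pay_pureStrat_right U x j ▸ hx.sum_mul_pos hU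

theorem pay_eq_sum_pay_pureStrat_left : pay U x y = ∑ i, x i * pay U (pureStrat i) y := by
  simp only [pay_pureStrat_left]
  simp only [pay, mul_sum, mul_assoc]

theorem pay_eq_sum_pay_pureStrat_right : pay U x y = ∑ j, y j * pay U x (pureStrat j) := by
  simp only [pay_pureStrat_right]
  simp only [pay, mul_sum]
  rw [sum_comm]
  exact sum_congr rfl fun _ _ => sum_congr rfl fun _ _ => by ring

end Payoffs

section Equilibria

variable {m k : ℕ} {U1 U2 : Fin m → Fin k → ℝ} {x : Fin m → ℝ} {y : Fin k → ℝ}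

theorem isNE_of_pureStrat_le (hx : isDist x) (hy : isDist y)
    (h1 : ∀ i, pay U1 (pureStrat i) y ≤ pay U1 x y)
    (h2 : ∀ j, pay U2 x (pureStrat j) ≤ pay U2 x y) : isNE U1 U2 x y := by
  refine ⟨hx, hy, fun x' hx' => ?_, fun y' hy' => ?_⟩
  · rw [pay_eq_sum_pay_pureStrat_left U1 x']
    exact hx'.sum_mul_le h1
  · rw [pay_eq_sum_pay_pureStrat_right U2 x y']
    exact hy'.sum_mul_le h2

theorem isNE.eq_zero_of_pay_lt_left (h : isNE U1 U2 x y) {i i' : Fin m}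
    (hlt : pay U1 (pureStrat i) y < pay U1 (pureStrat i') y) : x i = 0 :=
  h.1.eq_zero_of_lt (fun i'' => pay_eq_sum_pay_pureStrat_left U1 x y ▸
    h.2.2.1 _ (isDist_pureStrat i'')) hlt

theorem isNE.eq_zero_of_pay_lt_right (h : isNE U1 U2 x y) {j j' : Fin k}
    (hlt : pay U2 x (pureStrat j) < pay U2 x (pureStrat j')) : y j = 0 :=
  h.2.1.eq_zero_of_lt (fun j'' => pay_eq_sum_pay_pureStrat_right U2 x y ▸
    h.2.2.2 _ (isDist_pureStrat j'')) hlt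

end Equilibria

theorem h_unique_NE_general (ρ : ℝ) (h0 : 0 < ρ) :
    isNE (H1 ρ) (H2 ρ) (pureStrat 2) (pureStrat 2) ∧
    ∀ x y, isNE (H1 ρ) (H2 ρ) x y → x = pureStrat 2 ∧ y = pureStrat 2 := by
  refine ⟨isNE_of_pureStrat_le (isDist_pureStrat 2) (isDist_pureStrat 2) ?_ ?_, ?_⟩
  · intro i; fin_cases i <;> simp [pay_pureStrat_left, pureStrat, H1]
  · intro j; fin_cases j <;> simp [pay_pureStrat_right, pureStrat, H2]
  intro x y hNE
  have hrow : 0 < pay (H1 ρ) (pureStrat 2) y :=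
    pay_pureStrat_left_pos hNE.2.1 fun j => by fin_cases j <;> simp [H1, h0]
  have hcol : 0 < pay (H2 ρ) x (pureStrat 2) :=
    pay_pureStrat_right_pos hNE.1 fun i => by fin_cases i <;> simp [H2, h0]
  have hx1 : x 1 = 0 := hNE.eq_zero_of_pay_lt_left (i' := 2) (by
    simpa [pay_pureStrat_left, H1, Fin.sum_univ_three] using hrow)
  have hy0 : y 0 = 0 := hNE.eq_zero_of_pay_lt_right (j' := 2) (by
    simpa [pay_pureStrat_right, H2, Fin.sum_univ_three] using hcol)
  have hy1 : y 1 = 0 := hNE.eq_zero_of_pay_lt_right (j' := 2) (by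
    simpa [pay_pureStrat_right, H2, Fin.sum_univ_three, hx1] using hcol)
  have hx0 : x 0 = 0 := hNE.eq_zero_of_pay_lt_left (i' := 2) (by
    simpa [pay_pureStrat_left, H1, Fin.sum_univ_three, hy0] using hrow)
  refine ⟨hNE.1.eq_pureStrat ?_, hNE.2.1.eq_pureStrat ?_⟩
  · intro j hj; fin_cases j <;> simp_all
  · intro j hj; fin_cases j <;> simp_all

/-- For 0 < ρ < 1, the pureStrat profile (a3,a6) is the unique Nash equilibrium. -/
theorem h_unique_NE (ρ : ℝ) (h0 : 0 < ρ) (h1 : ρ < 1) :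
    isNE (H1 ρ) (H2 ρ) (pureStrat 2) (pureStrat 2) ∧
    ∀ x y, isNE (H1 ρ) (H2 ρ) x y → x = pureStrat 2 ∧ y = pureStrat 2 :=
  h_unique_NE_general ρ h0
end

section
/- In the 3x3 game with U1 = [[5,0,0],[0,0,0],[ρ,ρ,2]] and U2 = [[0,0,ρ],[0,5,ρ],[0,0,2]] for fixed 0 < ρ < 1, the Nash equilibrium (a3,a6) is weakly Pareto efficient, even though the pure outcome (a1,a4) has utility sum 5 which exceeds the equilibrium utility sum 4. -/
open Finset

/- Both payoffs exceed 2 only if `2(a + b) < 5ap` and `2(p + q) < 5bq`, where `(a, b)` and `(p, q)` are the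
weights of the first two actions. Multiplying, `4(a + b)(p + q) < 25 abpq`, and squaring against AM-GM
`(a + b)²(p + q)² ≥ 16 abpq` forces `abpq > 256/625`, while `abpq ≤ 1/16`. -/

lemma isDist_fin_three_iff (x : Fin 3 → ℝ) :
    isDist x ↔ (∀ i, 0 ≤ x i) ∧ x 0 + x 1 + x 2 = 1 := by
  simp only [isDist, Fin.sum_univ_three]

section Payoffs

variable {ρ : ℝ} {x y : Fin 3 → ℝ}

lemma pay_H1 : pay (H1 ρ) x y = 5 * x 0 * y 0 + ρ * x 2 * (y 0 + y 1) + 2 * x 2 * y 2 := by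
  simp only [pay, H1, Fin.sum_univ_three, Matrix.cons_val_zero, Matrix.cons_val_one,
    Matrix.cons_val_two, Matrix.head_cons, Matrix.tail_cons]
  ring

lemma pay_H2 : pay (H2 ρ) x y = 5 * x 1 * y 1 + ρ * (x 0 + x 1) * y 2 + 2 * x 2 * y 2 := by
  simp only [pay, H2, Fin.sum_univ_three, Matrix.cons_val_zero, Matrix.cons_val_one,
    Matrix.cons_val_two, Matrix.head_cons, Matrix.tail_cons]
  ring

lemma pay_H1_le (hρ : ρ ≤ 2) (hx : isDist x) (hy : isDist y) :
    pay (H1 ρ) x y ≤ 5 * x 0 * y 0 + 2 * x 2 := by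
  obtain ⟨hx0, -⟩ := (isDist_fin_three_iff x).1 hx
  obtain ⟨hy0, hy⟩ := (isDist_fin_three_iff y).1 hy
  have : ρ * x 2 * (y 0 + y 1) ≤ 2 * x 2 * (y 0 + y 1) :=
    mul_le_mul_of_nonneg_right (mul_le_mul_of_nonneg_right hρ (hx0 2)) (add_nonneg (hy0 0) (hy0 1))
  rw [pay_H1]
  linear_combination this + 2 * x 2 * hy

lemma pay_H2_le (hρ : ρ ≤ 2) (hx : isDist x) (hy : isDist y) :
    pay (H2 ρ) x y ≤ 5 * x 1 * y 1 + 2 * y 2 := by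
  obtain ⟨hx0, hx⟩ := (isDist_fin_three_iff x).1 hx
  obtain ⟨hy0, -⟩ := (isDist_fin_three_iff y).1 hy
  have : ρ * (x 0 + x 1) * y 2 ≤ 2 * (x 0 + x 1) * y 2 :=
    mul_le_mul_of_nonneg_right (mul_le_mul_of_nonneg_right hρ (add_nonneg (hx0 0) (hx0 1))) (hy0 2)
  rw [pay_H2]
  linear_combination this + 2 * y 2 * hx

end Payoffs

lemma false_of_lt_five_mul_of_lt_five_mul {a b p q : ℝ} (ha : 0 ≤ a) (hb : 0 ≤ b) (hp : 0 ≤ p)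
    (hq : 0 ≤ q) (hab : a + b ≤ 1) (hpq : p + q ≤ 1) (h₁ : 2 * (a + b) < 5 * a * p)
    (h₂ : 2 * (p + q) < 5 * b * q) : False := by
  set m := a * b * (p * q)
  have hab' : a * b ≤ 1 / 4 := by nlinarith [sq_nonneg (a - b)]
  have hpq' : p * q ≤ 1 / 4 := by nlinarith [sq_nonneg (p - q)]
  have hm_le : m ≤ 1 / 16 := by
    calc m ≤ 1 / 4 * (1 / 4) := mul_le_mul hab' hpq' (by positivity) (by norm_num)
      _ = 1 / 16 := by norm_num
  have hs : 0 ≤ (a + b) * (p + q) := by positivity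
  have hprod : 4 * ((a + b) * (p + q)) < 25 * m := by
    have := mul_lt_mul'' h₁ h₂ (by positivity) (by positivity)
    linear_combination this
  have hm_pos : 0 < m := by linarith
  have hamgm : 16 * m ≤ ((a + b) * (p + q)) ^ 2 := by
    have h₃ : 4 * (a * b) ≤ (a + b) ^ 2 := by nlinarith [sq_nonneg (a - b)]
    have h₄ : 4 * (p * q) ≤ (p + q) ^ 2 := by nlinarith [sq_nonneg (p - q)]
    calc 16 * m = (4 * (a * b)) * (4 * (p * q)) := by ring
      _ ≤ (a + b) ^ 2 * (p + q) ^ 2 := mul_le_mul h₃ h₄ (by positivity) (by positivity)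
      _ = ((a + b) * (p + q)) ^ 2 := by ring
  have hsq : 16 * m < (25 / 4 * m) ^ 2 :=
    hamgm.trans_lt (pow_lt_pow_left₀ (by linarith) hs two_ne_zero)
  nlinarith

theorem h_eq_weakly_pareto_general (ρ : ℝ) (h1 : ρ < 1) :
    (¬ ∃ x' y', isDist x' ∧ isDist y' ∧
        (2 : ℝ) < pay (H1 ρ) x' y' ∧ (2 : ℝ) < pay (H2 ρ) x' y') ∧
    H1 ρ 0 0 + H2 ρ 0 0 = 5 ∧
    H1 ρ 2 2 + H2 ρ 2 2 = 4 ∧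
    H1 ρ 2 2 + H2 ρ 2 2 < H1 ρ 0 0 + H2 ρ 0 0 := by
  have h00 : H1 ρ 0 0 + H2 ρ 0 0 = 5 := by norm_num [H1, H2, Matrix.cons_val_two]
  have h22 : H1 ρ 2 2 + H2 ρ 2 2 = 4 := by norm_num [H1, H2, Matrix.cons_val_two]
  refine ⟨?_, h00, h22, by linarith⟩
  rintro ⟨x, y, hx, hy, hP1, hP2⟩
  have hρ : ρ ≤ 2 := by linarith
  have hP1' := pay_H1_le hρ hx hy
  have hP2' := pay_H2_le hρ hx hy
  obtain ⟨hx0, hxsum⟩ := (isDist_fin_three_iff x).1 hx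
  obtain ⟨hy0, hysum⟩ := (isDist_fin_three_iff y).1 hy
  exact false_of_lt_five_mul_of_lt_five_mul (hx0 0) (hx0 1) (hy0 0) (hy0 1)
    (by linarith [hx0 2]) (by linarith [hy0 2]) (by linarith) (by linarith)

/-- For 0 < ρ < 1, the equilibrium (a3,a6) is weakly Pareto efficient (no mixed
profile gives both players strictly more than 2), even though the pureStrat outcome
(a1,a4) has utility sum 5, exceeding the equilibrium utility sum 4. -/
theorem h_eq_weakly_pareto (ρ : ℝ) (h0 : 0 < ρ) (h1 : ρ < 1) :
    (¬ ∃ x' y', isDist x' ∧ isDist y' ∧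
        (2 : ℝ) < pay (H1 ρ) x' y' ∧ (2 : ℝ) < pay (H2 ρ) x' y') ∧
    H1 ρ 0 0 + H2 ρ 0 0 = 5 ∧
    H1 ρ 2 2 + H2 ρ 2 2 = 4 ∧
    H1 ρ 2 2 + H2 ρ 2 2 < H1 ρ 0 0 + H2 ρ 0 0 :=
  h_eq_weakly_pareto_general ρ h1
end

section
/- For the minimization min γ subject to γ ≥ E_{x'}[Ũ_i] for all i ∈ N, over mixed profiles x' of an n-player game: there exists an optimal (or ε-optimal for every ε>0) solution in which each player's mixed strategy has support of size at most n. (Restricted form: once the strategies of all players but one are fixed, the objective is linear in the remaining player's strategy, so that player has a best response with support of size at most n.) -/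
/-!
Any mixed strategy `g` of player `k` can be replaced by one with support of size at most `n` that
is at least as good against every one of the `n` payoff functionals. If the support `s` of `g`
has more than `n` points, counting dimensions gives a nonzero `d` supported on `s` with
`∑ d = 0` along which all `n` functionals change by one common amount `r`; moving along `d` or
`-d`, whichever makes `r ≤ 0`, until a coordinate of `g` vanishes shrinks the support. The free
common value `r` is what lowers the bound from `n + 1` to `n`. Applying this to a minimizer of
the maximum over the compact simplex proves the theorem.
-/

open Finset

/-- Multilinear expected value of a payoff array `U` under a strategy profile `x`. -/
def expU {n : ℕ} {A : Fin n → Type*} [∀ i, Fintype (A i)]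
    (U : (∀ i, A i) → ℝ) (x : ∀ i, A i → ℝ) : ℝ :=
  ∑ a : ∀ i, A i, U a * ∏ j, x j (a j)

/-- A mixed strategy profile: one mixed strategy per player. -/
def isProfile {n : ℕ} {A : Fin n → Type*} [∀ i, Fintype (A i)]
    (x : ∀ i, A i → ℝ) : Prop :=
  ∀ i, isDist (x i)

open scoped Matrix

section SmallSupport

variable {β ι : Type*} [Fintype β] [Fintype ι]

lemma exists_add_smul_mem_stdSimplex_apply_eq_zero {g d : β → ℝ} (hg : g ∈ stdSimplex ℝ β)
    (hd : ∑ b, d b = 0) (hneg : ∃ b, d b < 0) :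
    ∃ t : ℝ, 0 ≤ t ∧ ∃ b, d b < 0 ∧ g + t • d ∈ stdSimplex ℝ β ∧ (g + t • d) b = 0 := by
  classical
  obtain ⟨b₀, hb₀⟩ := hneg
  obtain ⟨b, hb, hmin⟩ := (univ.filter (d · < 0)).exists_min_image (fun b => g b / -d b)
    ⟨b₀, by simpa using hb₀⟩
  rw [mem_filter] at hb
  have ht : 0 ≤ g b / -d b := div_nonneg (hg.1 b) (neg_pos.2 hb.2).le
  refine ⟨g b / -d b, ht, b, hb.2, ⟨fun b' => ?_, ?_⟩, ?_⟩
  · simp only [Pi.add_apply, Pi.smul_apply, smul_eq_mul]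
    by_cases hb' : d b' < 0
    · have := (le_div_iff₀ (neg_pos.2 hb')).1 (hmin b' (by simpa using hb'))
      linarith
    · exact add_nonneg (hg.1 b') (mul_nonneg ht (not_lt.1 hb'))
  · simp only [Pi.add_apply, Pi.smul_apply, smul_eq_mul, sum_add_distrib, ← mul_sum, hd, hg.2]
    ring
  · simp only [Pi.add_apply, Pi.smul_apply, smul_eq_mul]
    field_simp [hb.2.ne]
    ring

lemma exists_ne_zero_vecMul_eq_const (M : Matrix β ι ℝ) [Nonempty ι] {s : Finset β}
    (hs : Fintype.card ι < s.card) :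
    ∃ d : β → ℝ, d ≠ 0 ∧ (∀ b ∉ s, d b = 0) ∧ ∑ b, d b = 0 ∧ ∃ r : ℝ, d ᵥ* M = fun _ => r := by
  classical
  let T : ((β → ℝ) × ℝ) →ₗ[ℝ] (ι → ℝ) × ℝ × ((sᶜ : Finset β) → ℝ) :=
    { toFun := fun p => (p.1 ᵥ* M - fun _ => p.2, ∑ b, p.1 b, fun b => p.1 b)
      map_add' := fun p q => by
        ext <;> simp [Matrix.add_vecMul, sum_add_distrib, sub_add_sub_comm]
      map_smul' := fun c p => by
        ext <;> simp [Matrix.smul_vecMul, mul_sum, mul_sub] }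
  have hdim : Module.finrank ℝ ((ι → ℝ) × ℝ × ((sᶜ : Finset β) → ℝ)) <
      Module.finrank ℝ ((β → ℝ) × ℝ) := by
    simp only [Module.finrank_prod, Module.finrank_fintype_fun_eq_card, Module.finrank_self,
      Fintype.card_coe, card_compl]
    have := s.card_le_univ
    omega
  obtain ⟨⟨d, r⟩, hker, hne⟩ :=
    Submodule.exists_mem_ne_zero_of_ne_bot (T.ker_ne_bot_of_finrank_lt hdim)
  simp only [LinearMap.mem_ker, T, LinearMap.coe_mk, AddHom.coe_mk, Prod.mk_eq_zero] at hker
  obtain ⟨hM, hsum, hout⟩ := hker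
  have hM : d ᵥ* M = fun _ => r := sub_eq_zero.1 hM
  refine ⟨d, fun hd => hne ?_, fun b hb => congrFun hout ⟨b, by simpa using hb⟩, hsum, r, hM⟩
  subst hd
  obtain ⟨i⟩ := ‹Nonempty ι›
  have hr : r = 0 := by simpa [eq_comm] using congrFun hM i
  rw [hr, Prod.mk_zero_zero]

lemma exists_stdSimplex_vecMul_le_support_erase [DecidableEq β] (M : Matrix β ι ℝ) [Nonempty ι]
    {g : β → ℝ} (hg : g ∈ stdSimplex ℝ β) {s : Finset β} (hgs : ∀ b ∉ s, g b = 0)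
    (hs : Fintype.card ι < s.card) :
    ∃ g' ∈ stdSimplex ℝ β, ∃ b ∈ s, (∀ b' ∉ s.erase b, g' b' = 0) ∧ g' ᵥ* M ≤ g ᵥ* M := by
  obtain ⟨d, hd0, hds, hdsum, r, hdM⟩ := exists_ne_zero_vecMul_eq_const M hs
  obtain ⟨e, he0, hes, hesum, r, hr, heM⟩ : ∃ e : β → ℝ, e ≠ 0 ∧ (∀ b ∉ s, e b = 0) ∧
      ∑ b, e b = 0 ∧ ∃ r ≤ (0 : ℝ), e ᵥ* M = fun _ => r := by
    rcases le_total r 0 with hr | hr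
    · exact ⟨d, hd0, hds, hdsum, r, hr, hdM⟩
    · refine ⟨-d, neg_ne_zero.2 hd0, fun b hb => by simp [hds b hb], by simp [hdsum], -r,
        neg_nonpos.2 hr, ?_⟩
      rw [Matrix.neg_vecMul, hdM]
      rfl
  have hneg : ∃ b, e b < 0 := by
    by_contra! hnonneg
    exact he0 (funext fun b => (sum_eq_zero_iff_of_nonneg fun b _ => hnonneg b).1 hesum b
      (mem_univ b))
  obtain ⟨t, ht, b, heb, hmem, hzero⟩ := exists_add_smul_mem_stdSimplex_apply_eq_zero hg hesum hneg
  have hbs : b ∈ s := by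
    by_contra hbs
    exact heb.ne (hes b hbs)
  refine ⟨g + t • e, hmem, b, hbs, fun b' hb' => ?_, fun i => ?_⟩
  · by_cases hbb' : b' = b
    · rwa [hbb']
    · have hb's : b' ∉ s := fun h => hb' (mem_erase.2 ⟨hbb', h⟩)
      simp [hgs b' hb's, hes b' hb's]
  · rw [Matrix.add_vecMul, Matrix.smul_vecMul, heM]
    simpa using mul_nonpos_of_nonneg_of_nonpos ht hr

theorem exists_stdSimplex_vecMul_le_card_support_le (M : Matrix β ι ℝ) [Nonempty ι] {g : β → ℝ}
    (hg : g ∈ stdSimplex ℝ β) :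
    ∃ g' ∈ stdSimplex ℝ β, (∃ s : Finset β, s.card ≤ Fintype.card ι ∧ ∀ b ∉ s, g' b = 0) ∧
      g' ᵥ* M ≤ g ᵥ* M := by
  classical
  obtain ⟨s, hgs⟩ : ∃ s : Finset β, ∀ b ∉ s, g b = 0 := ⟨univ, fun b hb => absurd (mem_univ b) hb⟩
  induction s using Finset.strongInduction generalizing g with
  | H s ih =>
    by_cases hs : s.card ≤ Fintype.card ι
    · exact ⟨g, hg, ⟨s, hs, hgs⟩, le_rfl⟩
    obtain ⟨g', hg', b, hb, hg's, hle⟩ :=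
      exists_stdSimplex_vecMul_le_support_erase M hg hgs (not_le.1 hs)
    obtain ⟨g'', hg'', hsupp, hle'⟩ := ih _ (erase_ssubset hb) hg' hg's
    exact ⟨g'', hg'', hsupp, hle'.trans hle⟩

theorem exists_isMinOn_stdSimplex_sup'_vecMul (M : Matrix β ι ℝ) [Nonempty β] [Nonempty ι] :
    ∃ g ∈ stdSimplex ℝ β, (∃ s : Finset β, s.card ≤ Fintype.card ι ∧ ∀ b ∉ s, g b = 0) ∧
      IsMinOn (fun h => univ.sup' univ_nonempty (h ᵥ* M)) (stdSimplex ℝ β) g := by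
  classical
  have hcont : Continuous fun h : β → ℝ => univ.sup' univ_nonempty (h ᵥ* M) :=
    Continuous.finset_sup'_apply _ fun i _ =>
      continuous_apply i |>.comp (continuous_id.matrix_vecMul continuous_const)
  obtain ⟨g₀, hg₀, hmin⟩ := (isCompact_stdSimplex ℝ β).exists_isMinOn
    ⟨_, single_mem_stdSimplex ℝ (Classical.arbitrary β)⟩ hcont.continuousOn
  obtain ⟨g, hg, hsupp, hle⟩ := exists_stdSimplex_vecMul_le_card_support_le M hg₀
  exact ⟨g, hg, hsupp, fun h hh => (sup'_mono_fun fun i _ => hle i).trans (hmin hh)⟩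

end SmallSupport

lemma expU_update_eq_sum_pure {n : ℕ} {A : Fin n → Type*} [∀ i, Fintype (A i)] (k : Fin n)
    [DecidableEq (A k)] (W : (∀ i, A i) → ℝ) (x' : ∀ j, A j → ℝ) (g : A k → ℝ) :
    expU W (Function.update x' k g) =
      ∑ b, g b * expU W (Function.update x' k (Pi.single b 1)) := by
  have hfactor : ∀ g : A k → ℝ, expU W (Function.update x' k g) =
      ∑ a : ∀ i, A i, g (a k) * (W a * ∏ j ∈ univ \ {k}, x' j (a j)) := by
    intro g
    refine sum_congr rfl fun a _ => ?_
    rw [prod_congr rfl fun j _ => Function.apply_update (fun j (y : A j → ℝ) => y (a j)) x' k g j,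
      prod_update_of_mem (mem_univ k)]
    ring
  simp only [hfactor, mul_sum, Pi.single_apply]
  rw [sum_comm]
  simp

theorem minmax_small_support_general {n : ℕ} (hn : 0 < n)
    {A : Fin n → Type*} [∀ i, Fintype (A i)]
    (U : Fin n → (∀ i, A i) → ℝ) (x : ∀ i, A i → ℝ)
    (k : Fin n) (x' : ∀ j, A j → ℝ) (hx' : isProfile x') :
    ∃ g : A k → ℝ, isDist g ∧
      (∃ s : Finset (A k), s.card ≤ n ∧ ∀ a ∉ s, g a = 0) ∧
      ∀ h : A k → ℝ, isDist h →
        (Finset.univ.sup' ⟨⟨0, hn⟩, Finset.mem_univ _⟩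
            (fun i => expU (fun a => expU (U i) x - U i a) (Function.update x' k g))) ≤
        (Finset.univ.sup' ⟨⟨0, hn⟩, Finset.mem_univ _⟩
            (fun i => expU (fun a => expU (U i) x - U i a) (Function.update x' k h))) := by
  classical
  have : Nonempty (Fin n) := ⟨⟨0, hn⟩⟩
  have : Nonempty (A k) := by
    obtain ⟨b, -, -⟩ := exists_ne_zero_of_sum_ne_zero ((hx' k).2.symm ▸ one_ne_zero)
    exact ⟨b⟩
  set M : Matrix (A k) (Fin n) ℝ := Matrix.of fun b i =>
    expU (fun a => expU (U i) x - U i a) (Function.update x' k (Pi.single b 1))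
  have hM : ∀ w : A k → ℝ,
      (fun i => expU (fun a => expU (U i) x - U i a) (Function.update x' k w)) = w ᵥ* M :=
    fun w => funext fun i => expU_update_eq_sum_pure k _ x' w
  obtain ⟨g, hg, hsupp, hmin⟩ := exists_isMinOn_stdSimplex_sup'_vecMul M
  refine ⟨g, hg, by simpa using hsupp, fun h hh => ?_⟩
  rw [hM g, hM h]
  exact hmin hh

/-- Restricted small-support claim: once the strategies of all players but `k` are
fixed, the objective `x'_k ↦ max_i E[Ũ_i]` attains its minimum over the simplex at
a strategy whose support has at most `n` elements, where `Ũ_i(a) = E_x[U_i] − U_i(a)`. -/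
theorem minmax_small_support {n : ℕ} (hn : 0 < n)
    {A : Fin n → Type*} [∀ i, Fintype (A i)]
    (U : Fin n → (∀ i, A i) → ℝ) (x : ∀ i, A i → ℝ) (hx : isProfile x)
    (k : Fin n) (x' : ∀ j, A j → ℝ) (hx' : isProfile x') :
    ∃ g : A k → ℝ, isDist g ∧
      (∃ s : Finset (A k), s.card ≤ n ∧ ∀ a ∉ s, g a = 0) ∧
      ∀ h : A k → ℝ, isDist h →
        (Finset.univ.sup' ⟨⟨0, hn⟩, Finset.mem_univ _⟩
            (fun i => expU (fun a => expU (U i) x - U i a) (Function.update x' k g))) ≤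
        (Finset.univ.sup' ⟨⟨0, hn⟩, Finset.mem_univ _⟩
            (fun i => expU (fun a => expU (U i) x - U i a) (Function.update x' k h))) :=
  minmax_small_support_general hn U x k x' hx'
end
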